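/- arXiv:2210.03399 — 10 statements merged into one kernel-verified Lean document; each statement's English description precedes it below -/
import Mathlib

section
/- If G is a bipartite simple graph of order n, then the Mostar index of G satisfies Mo(G) ≤ (√3/18)·n³. -/
/-- `nG G u v` is the number of vertices of `G` whose distance to `u` is strictly
smaller than their distance to `v` (vertices at infinite distance to both `u` and `v`
are counted for neither, since the extended distance `⊤` is not `< ⊤`). -/
noncomputable def nG {V : Type*} [Fintype V] (G : SimpleGraph V) (u v : V) : ℕ :=
  Set.ncard {w : V | G.edist w u < G.edist w v}

/-- The Mostar index `Mo(G) = ∑_{uv ∈ E(G)} |nG(u,v) - nG(v,u)|` of a finite simple graph. -/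
noncomputable def mostar {V : Type*} [Fintype V] (G : SimpleGraph V) : ℤ :=
  ∑ e ∈ (Set.toFinite G.edgeSet).toFinset,
    Sym2.lift ⟨fun u v => |(nG G u v : ℤ) - (nG G v u : ℤ)|, fun _ _ => abs_sub_comm _ _⟩ e

/-! For an edge `uv` of a triangle-free graph, `u` and the neighbours of `u` other than `v` are
all strictly closer to `u` than to `v`, so `n(u,v) ≥ deg u`, `n(v,u) ≥ deg v`, and always
`n(u,v) + n(v,u) ≤ n`. Hence `n(u,v) - n(v,u) ≤ n - 2q` with `q = deg v` and `deg u ≤ n - q`,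
and the maximum of the cubic `q (n - q) (n - 2q)` gives
`n - 2q ≤ (√3/18) n² (1/(n - q) + 1/q) ≤ (√3/18) n² (1/deg u + 1/deg v)`.
Summed over the edges, `1/deg u + 1/deg v` counts every non-isolated vertex once, so the total is
at most `(√3/18) n³`. Bipartite graphs are triangle-free. -/

open Finset

-- `hid` factors the gap as a square times a nonnegative term; the double root `q = α₁ N` is the
-- maximiser on `[0, N]`.
lemma mul_sub_mul_sub_two_mul_le {N q : ℝ} (hq : 0 ≤ q) (hqN : q ≤ N) :
    q * (N - q) * (N - 2 * q) ≤ √3 / 18 * N ^ 3 := by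
  have hs2 : √3 ^ 2 = 3 := Real.sq_sqrt (by norm_num)
  have hs : 3 ≤ 2 * √3 := by nlinarith [Real.sqrt_nonneg 3]
  have hid : 6 * (√3 * N ^ 3 - 18 * q * (N - q) * (N - 2 * q))
      = (6 * q - (3 - √3) * N) ^ 2 * ((3 + 2 * √3) * N - 6 * q) := by
    linear_combination (9 * N ^ 3 - 18 * N ^ 2 * q - 2 * √3 * N ^ 3) * hs2
  have hfactor : 0 ≤ (3 + 2 * √3) * N - 6 * q := by nlinarith
  nlinarith [mul_nonneg (sq_nonneg (6 * q - (3 - √3) * N)) hfactor]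

lemma sub_two_mul_le_inv_add_inv {N p q : ℝ} (hp : 0 < p) (hq : 0 < q) (hpq : p + q ≤ N) :
    N - 2 * q ≤ √3 / 18 * N ^ 2 * (p⁻¹ + q⁻¹) := by
  rcases le_or_gt (N - 2 * q) 0 with hneg | hpos
  · exact hneg.trans (by positivity)
  have hNq : 0 < N - q := by linarith
  calc N - 2 * q = q * (N - q) * (N - 2 * q) / (q * (N - q)) := by field_simp
    _ ≤ √3 / 18 * N ^ 3 / (q * (N - q)) := by
      gcongr ?_ / _; exact mul_sub_mul_sub_two_mul_le hq.le (by linarith)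
    _ = √3 / 18 * N ^ 2 * ((N - q)⁻¹ + q⁻¹) := by field_simp; ring
    _ ≤ √3 / 18 * N ^ 2 * (p⁻¹ + q⁻¹) := by gcongr; linarith

lemma abs_sub_le_inv_add_inv {N a b p q : ℝ} (hp : 0 < p) (hq : 0 < q) (hpa : p ≤ a)
    (hqb : q ≤ b) (hab : a + b ≤ N) : |a - b| ≤ √3 / 18 * N ^ 2 * (p⁻¹ + q⁻¹) := by
  have hpq : p + q ≤ N := by linarith
  rw [abs_sub_le_iff]
  constructor
  · linarith [sub_two_mul_le_inv_add_inv hp hq hpq]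
  · linarith [add_comm p⁻¹ q⁻¹ ▸ sub_two_mul_le_inv_add_inv hq hp (by linarith)]

namespace SimpleGraph

variable {V : Type*} [Fintype V] {G : SimpleGraph V}

lemma nG_eq_card_filter (u v : V) :
    nG G u v = #{w | G.edist w u < G.edist w v} := by
  classical
  rw [nG, Set.ncard_eq_toFinset_card', Set.toFinset_ofPred]

lemma nG_add_nG_le_card (u v : V) : nG G u v + nG G v u ≤ Fintype.card V := by
  classical
  rw [nG_eq_card_filter, nG_eq_card_filter, ← card_union_of_disjoint]
  · exact card_le_univ _
  · exact disjoint_filter.mpr fun w _ h => h.asymm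

lemma degree_le_nG [DecidableRel G.Adj] (hG : G.CliqueFree 3) {u v : V} (huv : G.Adj u v) :
    G.degree u ≤ nG G u v := by
  classical
  rw [nG_eq_card_filter, ← card_neighborFinset_eq_degree]
  -- swapping `u` and `v` sends the neighbours of `u` into the vertices closer to `u`
  refine card_le_card_of_injOn (Equiv.swap u v) (fun w hw => ?_) (Equiv.injective _).injOn
  rw [mem_coe, mem_filter_univ]
  rw [mem_coe, mem_neighborFinset] at hw
  by_cases hwv : w = v
  · subst hwv
    rw [Equiv.swap_apply_right, edist_self, edist_eq_one_iff_adj.mpr huv]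
    exact zero_lt_one
  · rw [Equiv.swap_apply_of_ne_of_ne (G.ne_of_adj hw).symm hwv, edist_eq_one_iff_adj.mpr hw.symm]
    have hnadj : ¬ G.Adj w v := G.isIndepSet_neighborSet_of_triangleFree hG u hw huv hwv
    have hpos : 0 < G.edist w v := pos_iff_ne_zero.mpr (edist_eq_zero_iff.not.mpr hwv)
    exact lt_of_le_of_ne (Order.one_le_iff_pos.mpr hpos)
      (Ne.symm (edist_eq_one_iff_adj.not.mpr hnadj))

lemma abs_nG_sub_nG_le [DecidableRel G.Adj] (hG : G.CliqueFree 3) {u v : V} (huv : G.Adj u v) :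
    |(nG G u v : ℝ) - nG G v u| ≤
      √3 / 18 * Fintype.card V ^ 2 * ((G.degree u : ℝ)⁻¹ + (G.degree v : ℝ)⁻¹) :=
  abs_sub_le_inv_add_inv
    (by exact_mod_cast (G.degree_pos_iff_exists_adj u).mpr ⟨v, huv⟩)
    (by exact_mod_cast (G.degree_pos_iff_exists_adj v).mpr ⟨u, huv.symm⟩)
    (by exact_mod_cast degree_le_nG hG huv) (by exact_mod_cast degree_le_nG hG huv.symm)
    (by exact_mod_cast nG_add_nG_le_card u v)

lemma sum_edgeFinset_lift_add [DecidableEq V] [DecidableRel G.Adj] {M : Type*} [AddCommMonoid M]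
    (g : V → M) :
    ∑ e ∈ G.edgeFinset, Sym2.lift ⟨fun u v => g u + g v, fun _ _ => add_comm _ _⟩ e =
      ∑ v, G.degree v • g v := by
  calc ∑ e ∈ G.edgeFinset, Sym2.lift ⟨fun u v => g u + g v, fun _ _ => add_comm _ _⟩ e
      = ∑ e ∈ G.edgeFinset, ∑ d : G.Dart with d.edge = e, g d.fst := by
        refine sum_congr rfl fun e he => ?_
        induction e with | _ u v => ?_
        let d : G.Dart := ⟨(u, v), mem_edgeFinset.mp he⟩
        rw [show s(u, v) = d.edge from rfl, d.edge_fiber, sum_pair d.symm_ne.symm]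
        rfl
    _ = ∑ d : G.Dart, g d.fst :=
        sum_fiberwise_of_maps_to (fun d _ => mem_edgeFinset.mpr d.edge_mem) _
    _ = ∑ v, ∑ d : G.Dart with d.fst = v, g d.fst := by
        rw [sum_fiberwise]
    _ = ∑ v, G.degree v • g v := by
        refine sum_congr rfl fun v _ => ?_
        rw [sum_congr rfl fun d hd => congrArg g (mem_filter.mp hd).2, sum_const,
          dart_fst_fiber_card_eq_degree]

lemma mostar_eq_sum_edgeFinset [DecidableRel G.Adj] :
    (mostar G : ℝ) = ∑ e ∈ G.edgeFinset,
      Sym2.lift ⟨fun u v => |(nG G u v : ℝ) - nG G v u|, fun _ _ => abs_sub_comm _ _⟩ e := by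
  rw [mostar, Set.toFinite_toFinset, ← edgeFinset, Int.cast_sum]
  refine sum_congr rfl fun e _ => ?_
  induction e with | _ u v => push_cast [Sym2.lift_mk]; rfl

theorem mostar_le_of_cliqueFree_three (hG : G.CliqueFree 3) :
    (mostar G : ℝ) ≤ √3 / 18 * Fintype.card V ^ 3 := by
  classical
  have hcard : ∑ v, G.degree v • (G.degree v : ℝ)⁻¹ ≤ Fintype.card V := by
    calc ∑ v, G.degree v • (G.degree v : ℝ)⁻¹ ≤ ∑ _v : V, (1 : ℝ) :=
          sum_le_sum fun v _ => by rw [nsmul_eq_mul]; exact mul_inv_le_one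
      _ = Fintype.card V := by simp
  calc (mostar G : ℝ)
      ≤ ∑ e ∈ G.edgeFinset, √3 / 18 * Fintype.card V ^ 2 *
          Sym2.lift ⟨fun u v => (G.degree u : ℝ)⁻¹ + (G.degree v : ℝ)⁻¹,
            fun _ _ => add_comm _ _⟩ e := by
        rw [mostar_eq_sum_edgeFinset]
        refine sum_le_sum fun e he => ?_
        induction e with | _ u v => exact abs_nG_sub_nG_le hG (mem_edgeFinset.mp he)
    _ = √3 / 18 * Fintype.card V ^ 2 * ∑ v, G.degree v • (G.degree v : ℝ)⁻¹ := by
        rw [← mul_sum, sum_edgeFinset_lift_add]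
    _ ≤ √3 / 18 * Fintype.card V ^ 2 * Fintype.card V := by gcongr
    _ = √3 / 18 * Fintype.card V ^ 3 := by ring

end SimpleGraph

/-- If `G` is a bipartite simple graph of order `n`, then `Mo(G) ≤ (√3/18)·n³`. -/
theorem mostar_bipartite_le {V : Type*} [Fintype V] (G : SimpleGraph V) (n : ℕ)
    (hn : Fintype.card V = n) (hbip : G.Colorable 2) :
    (mostar G : ℝ) ≤ (Real.sqrt 3 / 18) * (n : ℝ) ^ 3 :=
  hn ▸ G.mostar_le_of_cliqueFree_three (hbip.cliqueFree (by norm_num))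
end

section
/- Let G be a split graph of order n that arises from the disjoint union of a clique C of order c and an independent set I of order n−c (with n−c ≥ 1) by adding m edges, each joining a vertex of C to a vertex of I. If 3c ≤ n − 1 (i.e., c/n ≤ 1/3 − 1/(3n)), then Mo(G) ≤ c·(n−c)·(n−c−1). -/
/-!
Charge the contribution of every edge to the vertices of `I = Cᶜ`. If `u, v ∈ C`, a vertex
closer to `u` than to `v` is `u` itself or a vertex of `I` adjacent to `u` but not to `v` (a
non-isolated vertex of `I` is within distance 2 of all of `C`); as `n(v,u) ≥ 1`, the edge
contributes at most the number of such private neighbours of `u` plus those of `v`. If `u ∈ C`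
and `v ∈ I`, a vertex closer to `v` lies in `I`, and a vertex closer to `u` is `u`, a
non-neighbour of `v` in `C` or a vertex of `I` other than `v`. Summing, a vertex `w ∈ I` with `a`
neighbours and `b` non-neighbours in `C` is charged `a b` by the clique edges and
`a (b + |I| - 1)` by its own edges, which is at most `c (|I| - 1)` because `a + b = c` and
`2a ≤ 2c < |I|`.
-/

open Finset

namespace SimpleGraph

variable {V : Type*} {G : SimpleGraph V}

theorem ne_and_not_adj_of_edist_lt {u v w : V} (h : G.edist w u < G.edist w v) (hwu : w ≠ u) :
    w ≠ v ∧ ¬G.Adj w v := by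
  have hv : ¬G.edist w v ≤ 1 := fun hv =>
    h.not_ge (hv.trans (Order.one_le_iff_pos.2 (edist_pos_of_ne hwu)))
  rw [edist_le_one_iff_adj_or_eq] at hv
  tauto

theorem exists_adj_of_edist_ne_top {u w : V} (h : G.edist w u ≠ ⊤) (hwu : w ≠ u) :
    ∃ x, G.Adj w x :=
  let ⟨p⟩ := reachable_of_edist_ne_top h
  ⟨_, p.adj_snd (Walk.not_nil_of_ne hwu)⟩

section CliqueCounts

variable (G) [DecidableRel G.Adj] (C : Finset V)

def cardAdjIn (w : V) : ℕ := #{u ∈ C | G.Adj u w}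

def cardNonadjIn (w : V) : ℕ := #{u ∈ C | ¬G.Adj u w}

theorem cardAdjIn_add_cardNonadjIn (w : V) : G.cardAdjIn C w + G.cardNonadjIn C w = #C :=
  card_filter_add_card_filter_not _

end CliqueCounts

section Finite

variable [Fintype V]

theorem two_nsmul_sum_edgeFinset_lift [DecidableEq V] [DecidableRel G.Adj] {M : Type*}
    [AddCommMonoid M] (f : V → V → M) (hf : ∀ x y, f x y = f y x) :
    2 • ∑ e ∈ G.edgeFinset, Sym2.lift ⟨f, hf⟩ e
      = ∑ p : V × V with G.Adj p.1 p.2, f p.1 p.2 := by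
  rw [← sum_fiberwise_of_maps_to (g := fun p : V × V => s(p.1, p.2)) (t := G.edgeFinset)
    (fun p hp => by simpa using hp), smul_sum]
  refine sum_congr rfl fun e he => ?_
  induction e using Sym2.ind with | h x y => ?_
  have hxy : G.Adj x y := by simpa using he
  have hfiber : ({p : V × V | G.Adj p.1 p.2} : Finset _).filter (fun p => s(p.1, p.2) = s(x, y))
      = {(x, y), (y, x)} := by
    ext ⟨a, b⟩
    simp only [mem_filter, mem_univ, true_and, Sym2.eq_iff, mem_insert, mem_singleton,
      Prod.mk.injEq]
    grind [G.adj_symm]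
  rw [hfiber, sum_pair (by simp [hxy.ne]), Sym2.lift_mk, hf y x, two_nsmul]

theorem two_mul_mostar [DecidableEq V] [DecidableRel G.Adj] :
    2 * mostar G = ∑ p : V × V with G.Adj p.1 p.2, |(nG G p.1 p.2 : ℤ) - nG G p.2 p.1| := by
  rw [mostar, Set.Finite.toFinset_eq_toFinset, two_mul, ← two_nsmul]
  exact two_nsmul_sum_edgeFinset_lift _ _

theorem nG_le_card {u v : V} {F : Finset V} (h : ∀ w, G.edist w u < G.edist w v → w ∈ F) :
    nG G u v ≤ #F :=
  (Set.ncard_le_ncard (fun w hw => h w hw) F.finite_toSet).trans (Set.ncard_coe_finset F).le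

theorem one_le_nG {u v : V} (huv : u ≠ v) : 1 ≤ nG G u v :=
  (Set.ncard_pos (Set.toFinite _)).2 ⟨u, by simpa using G.edist_pos_of_ne huv⟩

theorem abs_nG_sub_nG_le_s2 {u v : V} (huv : u ≠ v) {k : ℕ} (hu : nG G u v ≤ k + 1)
    (hv : nG G v u ≤ k + 1) : |(nG G u v : ℤ) - nG G v u| ≤ k := by
  have := one_le_nG (G := G) huv
  have := one_le_nG (G := G) huv.symm
  rw [abs_sub_le_iff]
  omega

theorem nG_le_card_compl [DecidableEq V] {C : Finset V} (hC : G.IsClique (C : Set V)) {u v : V}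
    (hu : u ∈ C) (hv : v ∉ C) : nG G v u ≤ #Cᶜ :=
  nG_le_card fun w hw => mem_compl.2 fun hwC => by
    have hwv : w ≠ v := fun h => hv (h ▸ hwC)
    obtain ⟨hwu, hnwu⟩ := ne_and_not_adj_of_edist_lt hw hwv
    exact hnwu (hC hwC hu hwu)

section SplitGraph

variable [DecidableEq V] [DecidableRel G.Adj] {C : Finset V}

variable (G C) in
def cardPrivateOutside (u v : V) : ℕ := #{w ∈ Cᶜ | G.Adj u w ∧ ¬G.Adj v w}

theorem nG_le_cardPrivateOutside_add_one (hC : G.IsClique (C : Set V))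
    (hI : G.IsIndepSet (↑C)ᶜ) {u v : V} (hv : v ∈ C) :
    nG G u v ≤ G.cardPrivateOutside C u v + 1 := by
  refine (nG_le_card (F := insert u {w ∈ Cᶜ | G.Adj u w ∧ ¬G.Adj v w}) fun w hw => ?_).trans
    (card_insert_le _ _)
  rcases eq_or_ne w u with rfl | hwu
  · exact mem_insert_self _ _
  obtain ⟨hwv, hnwv⟩ := ne_and_not_adj_of_edist_lt hw hwu
  have hwC : w ∉ C := fun hwC => hnwv (hC hwC hv hwv)
  refine mem_insert_of_mem (mem_filter.2 ⟨mem_compl.2 hwC, ?_, fun h => hnwv h.symm⟩)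
  -- `w` has a neighbour, which lies in the clique, so `w` is within distance 2 of `v`
  obtain ⟨x, hwx⟩ := exists_adj_of_edist_ne_top (hw.trans_le le_top).ne hwu
  have hxC : x ∈ C := by
    by_contra hxC
    exact hI hwC hxC hwx.ne hwx
  have hxv : G.Adj x v := hC hxC hv fun h => hnwv (h ▸ hwx)
  have hwv2 : G.edist w v ≤ 2 := G.edist_triangle.trans <| by
    rw [edist_eq_one_iff_adj.2 hwx, edist_eq_one_iff_adj.2 hxv, one_add_one_eq_two]
  have := ENat.lt_two_iff.1 (hw.trans_le hwv2)
  rcases edist_le_one_iff_adj_or_eq.1 this with h | h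
  exacts [h.symm, absurd h hwu]

theorem nG_le_cardNonadjIn_add {u v : V} (hv : v ∉ C) :
    nG G u v ≤ G.cardNonadjIn C v + (#Cᶜ - 1) + 1 := by
  have hcover := nG_le_card (G := G) (u := u) (v := v)
    (F := insert u {x ∈ C | ¬G.Adj x v} ∪ Cᶜ.erase v) fun w hw => by
      rcases eq_or_ne w u with rfl | hwu
      · exact mem_union_left _ (mem_insert_self _ _)
      obtain ⟨hwv, hnwv⟩ := ne_and_not_adj_of_edist_lt hw hwu
      by_cases hwC : w ∈ C
      · exact mem_union_left _ (mem_insert_of_mem (mem_filter.2 ⟨hwC, hnwv⟩))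
      · exact mem_union_right _ (mem_erase.2 ⟨hwv, mem_compl.2 hwC⟩)
  have := card_union_le (insert u {x ∈ C | ¬G.Adj x v}) (Cᶜ.erase v)
  have := card_insert_le u {x ∈ C | ¬G.Adj x v}
  have := card_erase_of_mem (mem_compl.2 hv)
  simp only [cardNonadjIn]
  omega

theorem abs_nG_sub_nG_le_of_mem_of_mem (hC : G.IsClique (C : Set V)) (hI : G.IsIndepSet (↑C)ᶜ)
    {u v : V} (hu : u ∈ C) (hv : v ∈ C) (huv : u ≠ v) :
    |(nG G u v : ℤ) - nG G v u|
      ≤ ↑(G.cardPrivateOutside C u v + G.cardPrivateOutside C v u) := by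
  have := nG_le_cardPrivateOutside_add_one hC hI (u := u) hv
  have := nG_le_cardPrivateOutside_add_one hC hI (u := v) hu
  exact abs_nG_sub_nG_le_s2 huv (by omega) (by omega)

theorem abs_nG_sub_nG_le_of_mem_of_notMem (hC : G.IsClique (C : Set V)) {u v : V} (hu : u ∈ C)
    (hv : v ∉ C) : |(nG G u v : ℤ) - nG G v u| ≤ ↑(G.cardNonadjIn C v + (#Cᶜ - 1)) := by
  have := nG_le_card_compl hC hu hv
  exact abs_nG_sub_nG_le_s2 (ne_of_mem_of_not_mem hu hv) (nG_le_cardNonadjIn_add hv) (by omega)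

variable (G C) in
def edgeBound (u v : V) : ℕ :=
  if u ∈ C then
    if v ∈ C then G.cardPrivateOutside C u v + G.cardPrivateOutside C v u
    else G.cardNonadjIn C v + (#Cᶜ - 1)
  else if v ∈ C then G.cardNonadjIn C u + (#Cᶜ - 1) else 0

theorem abs_nG_sub_nG_le_edgeBound (hC : G.IsClique (C : Set V)) (hI : G.IsIndepSet (↑C)ᶜ)
    {u v : V} (huv : G.Adj u v) : |(nG G u v : ℤ) - nG G v u| ≤ G.edgeBound C u v := by
  by_cases hu : u ∈ C <;> by_cases hv : v ∈ C <;>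
    simp only [edgeBound, hu, hv, if_true, if_false]
  · exact abs_nG_sub_nG_le_of_mem_of_mem hC hI hu hv huv.ne
  · exact abs_nG_sub_nG_le_of_mem_of_notMem hC hu hv
  · rw [abs_sub_comm]
    exact abs_nG_sub_nG_le_of_mem_of_notMem hC hv hu
  · exact absurd huv (hI hu hv huv.ne)

theorem sum_sum_cardPrivateOutside :
    ∑ u ∈ C, ∑ v ∈ C, G.cardPrivateOutside C u v
      = ∑ w ∈ Cᶜ, G.cardAdjIn C w * G.cardNonadjIn C w := by
  simp only [cardPrivateOutside, cardAdjIn, cardNonadjIn, card_filter, sum_mul_sum,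
    ite_zero_mul_ite_zero, mul_one]
  calc _ = ∑ u ∈ C, ∑ w ∈ Cᶜ, ∑ v ∈ C, if G.Adj u w ∧ ¬G.Adj v w then 1 else 0 :=
        sum_congr rfl fun _ _ => sum_comm
    _ = _ := sum_comm

theorem sum_edgeBound (hC : G.IsClique (C : Set V)) (hI : G.IsIndepSet (↑C)ᶜ) :
    ∑ p : V × V with G.Adj p.1 p.2, G.edgeBound C p.1 p.2
      = 2 * ∑ w ∈ Cᶜ, (G.cardAdjIn C w * G.cardNonadjIn C w
          + G.cardAdjIn C w * (G.cardNonadjIn C w + (#Cᶜ - 1))) := by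
  have hrow_in : ∀ u ∈ C, ∑ v, (if G.Adj u v then G.edgeBound C u v else 0)
      = ∑ v ∈ C, (G.cardPrivateOutside C u v + G.cardPrivateOutside C v u)
        + ∑ v ∈ Cᶜ, if G.Adj u v then G.cardNonadjIn C v + (#Cᶜ - 1) else 0 := by
    intro u hu
    rw [← sum_add_sum_compl C]
    congr 1 <;> refine sum_congr rfl fun v hv => ?_
    · rcases eq_or_ne u v with rfl | huv
      · simp [cardPrivateOutside]
      · simp [edgeBound, hu, hv, hC hu hv huv]
    · simp [edgeBound, hu, mem_compl.1 hv]
  have hrow_out : ∀ u ∈ Cᶜ, ∑ v, (if G.Adj u v then G.edgeBound C u v else 0)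
      = G.cardAdjIn C u * (G.cardNonadjIn C u + (#Cᶜ - 1)) := by
    intro u hu
    have hu' : u ∉ C := mem_compl.1 hu
    rw [← sum_add_sum_compl C, add_eq_left.2 <| sum_eq_zero fun v hv =>
      if_neg fun h => hI hu' (mem_compl.1 hv) h.ne h]
    calc _ = ∑ v ∈ C, if G.Adj v u then G.cardNonadjIn C u + (#Cᶜ - 1) else 0 :=
          sum_congr rfl fun v hv => by simp [edgeBound, hu', hv, G.adj_comm]
      _ = _ := by rw [sum_ite, sum_const_zero, add_zero, sum_const, smul_eq_mul, cardAdjIn]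
  have hcross :
      ∑ u ∈ C, ∑ v ∈ Cᶜ, (if G.Adj u v then G.cardNonadjIn C v + (#Cᶜ - 1) else 0)
      = ∑ v ∈ Cᶜ, G.cardAdjIn C v * (G.cardNonadjIn C v + (#Cᶜ - 1)) := by
    rw [sum_comm]
    refine sum_congr rfl fun v _ => ?_
    rw [sum_ite, sum_const_zero, add_zero, sum_const, smul_eq_mul, cardAdjIn]
  have hclique_part :
      ∑ u ∈ C, ∑ v ∈ C, (G.cardPrivateOutside C u v + G.cardPrivateOutside C v u)
      = 2 * ∑ w ∈ Cᶜ, G.cardAdjIn C w * G.cardNonadjIn C w := by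
    simp only [sum_add_distrib]
    rw [sum_comm, ← two_mul, sum_comm, sum_sum_cardPrivateOutside]
  rw [sum_filter, Fintype.sum_prod_type, ← sum_add_sum_compl C, sum_congr rfl hrow_in,
    sum_congr rfl hrow_out, sum_add_distrib, hclique_part, hcross, sum_add_distrib]
  ring

theorem sum_edgeBound_le (hC : G.IsClique (C : Set V)) (hI : G.IsIndepSet (↑C)ᶜ)
    (hsmall : 2 * #C + 1 ≤ #Cᶜ) :
    ∑ p : V × V with G.Adj p.1 p.2, G.edgeBound C p.1 p.2
      ≤ 2 * (#Cᶜ * (#C * (#Cᶜ - 1))) := by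
  rw [sum_edgeBound hC hI, ← smul_eq_mul #Cᶜ, ← sum_const]
  gcongr with w
  have hab := G.cardAdjIn_add_cardNonadjIn C w
  have h2a : 2 * G.cardAdjIn C w ≤ #Cᶜ - 1 := by omega
  nlinarith [Nat.mul_le_mul_left (G.cardNonadjIn C w) h2a]

theorem mostar_le_of_isClique_of_isIndepSet (hC : G.IsClique (C : Set V))
    (hI : G.IsIndepSet (↑C)ᶜ) (hsmall : 2 * #C + 1 ≤ #Cᶜ) :
    mostar G ≤ #C * #Cᶜ * (#Cᶜ - 1 : ℤ) := by
  have hbound := sum_edgeBound_le hC hI hsmall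
  have hdouble : 2 * mostar G ≤ ∑ p : V × V with G.Adj p.1 p.2, (G.edgeBound C p.1 p.2 : ℤ) := by
    rw [two_mul_mostar]
    exact sum_le_sum fun p hp => abs_nG_sub_nG_le_edgeBound hC hI (mem_filter.1 hp).2
  have h1 : 1 ≤ #Cᶜ := by omega
  zify [h1] at hbound
  linarith

end SplitGraph

end Finite

end SimpleGraph

theorem mostar_split_le_small_clique_general {V : Type*} [Fintype V] (G : SimpleGraph V)
    (n c : ℕ) (hn : Fintype.card V = n)
    (C : Finset V) (hC : C.card = c)
    (hclique : ∀ u ∈ C, ∀ v ∈ C, u ≠ v → G.Adj u v)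
    (hindep : ∀ u ∉ C, ∀ v ∉ C, ¬ G.Adj u v)
    (h3c : 3 * (c : ℤ) ≤ (n : ℤ) - 1) :
    (mostar G : ℝ) ≤ (c : ℝ) * ((n : ℝ) - (c : ℝ)) * ((n : ℝ) - (c : ℝ) - 1) := by
  classical
  have hcompl : (#Cᶜ : ℤ) = n - c := by
    rw [card_compl, hn, hC]
    omega
  have hbound := SimpleGraph.mostar_le_of_isClique_of_isIndepSet (G := G) (C := C)
    (fun u hu v hv huv => hclique u hu v hv huv) (fun u hu v hv _ => hindep u hu v hv)
    (by omega)
  rw [hcompl, hC] at hbound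
  exact_mod_cast hbound

/-- For a split graph of order `n` with clique of order `c`, independent set of order
`n - c ≥ 1` and `m` cross edges: if `3c ≤ n - 1` then `Mo(G) ≤ c·(n-c)·(n-c-1)`. -/
theorem mostar_split_le_small_clique {V : Type*} [Fintype V] [DecidableEq V] (G : SimpleGraph V)
    [DecidableRel G.Adj] (n c m : ℕ) (hn : Fintype.card V = n)
    (C : Finset V) (hC : C.card = c)
    (hclique : ∀ u ∈ C, ∀ v ∈ C, u ≠ v → G.Adj u v)
    (hindep : ∀ u ∉ C, ∀ v ∉ C, ¬ G.Adj u v)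
    (hm : (G.edgeFinset.filter fun e => ∃ v ∈ e, v ∉ C).card = m)
    (hcn : c < n) (h3c : 3 * (c : ℤ) ≤ (n : ℤ) - 1) :
    (mostar G : ℝ) ≤ (c : ℝ) * ((n : ℝ) - (c : ℝ)) * ((n : ℝ) - (c : ℝ) - 1) :=
  mostar_split_le_small_clique_general G n c hn C hC hclique hindep h3c
end

section
/- Let α₁ = (1 − 1/√3)/2. There exists a positive integer N such that for every integer n ≥ N, the Mostar index of the complete bipartite graph K_{⌊α₁n⌋, n−⌊α₁n⌋} is strictly larger than the Mostar index of K_{⌊n/3⌋, n−⌊n/3⌋}. -/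
open SimpleGraph in
lemma nG_left (a b : ℕ) (x : Fin a) (y : Fin b) :
    nG (completeBipartiteGraph (Fin a) (Fin b)) (Sum.inl x) (Sum.inr y) = b := by
  set G := completeBipartiteGraph (Fin a) (Fin b) with hG
  have hadj : G.Adj (Sum.inl x) (Sum.inr y) := by simp [hG, completeBipartiteGraph]
  have hset : {w | G.edist w (Sum.inl x) < G.edist w (Sum.inr y)}
      = insert (Sum.inl x : Fin a ⊕ Fin b) (Sum.inr '' ({y}ᶜ)) := by
    ext w
    rcases w with x' | z
    · simp only [Set.mem_setOf_eq, Set.mem_insert_iff, Set.mem_image]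
      constructor
      · intro h
        by_contra hne
        have hx : x' ≠ x := by
          intro h'; apply hne; left; rw [h']
        have h1 : G.edist (Sum.inl x') (Sum.inr y) = 1 :=
          edist_eq_one_iff_adj.mpr (by simp [hG, completeBipartiteGraph])
        rw [h1] at h
        have : G.edist (Sum.inl x') (Sum.inl x) = 0 := by
          exact ENat.lt_one_iff_eq_zero.mp h
        rw [edist_eq_zero_iff] at this
        simp at this
        exact hx this
      · rintro (h | ⟨z, hz, h⟩)
        · rcases Sum.inl.inj h with rfl
          rw [SimpleGraph.edist_self, edist_eq_one_iff_adj.mpr hadj]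
          norm_num
        · exact absurd h (by simp)
    · simp only [Set.mem_setOf_eq, Set.mem_insert_iff, Set.mem_image, Set.mem_compl_iff,
        Set.mem_singleton_iff]
      have h1 : G.edist (Sum.inr z) (Sum.inl x) = 1 :=
        edist_eq_one_iff_adj.mpr (by simp [hG, completeBipartiteGraph])
      rw [h1]
      constructor
      · intro h
        right
        refine ⟨z, ?_, rfl⟩
        rintro rfl
        rw [SimpleGraph.edist_self] at h
        simp at h
      · rintro (h | ⟨z', hz, h⟩)
        · exact absurd h (by simp)
        · rcases Sum.inr.inj h with rfl
          have hne : (Sum.inr z' : Fin a ⊕ Fin b) ≠ Sum.inr y := by simpa using hz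
          have h0 : G.edist (Sum.inr z') (Sum.inr y) ≠ 0 := by
            exact fun h => hne (edist_eq_zero_iff.mp h)
          have h1' : G.edist (Sum.inr z') (Sum.inr y) ≠ 1 := by
            exact fun h => by simpa [hG, completeBipartiteGraph] using edist_eq_one_iff_adj.mp h
          have : 1 ≤ G.edist (Sum.inr z') (Sum.inr y) :=
            Order.one_le_iff_pos.mpr (pos_iff_ne_zero.mpr h0)
          exact lt_of_le_of_ne this (Ne.symm h1')
  rw [nG, hset, Set.ncard_insert_of_notMem (by simp),
    Set.ncard_image_of_injective _ Sum.inr_injective]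
  have : ({y}ᶜ : Set (Fin b)).ncard = b - 1 := by
    rw [Set.compl_eq_univ_diff, Set.ncard_diff (Set.subset_univ _), Set.ncard_univ, Set.ncard_singleton]
    simp
  rw [this]
  have hb : 0 < b := y.pos
  omega

open SimpleGraph in
lemma nG_right (a b : ℕ) (x : Fin a) (y : Fin b) :
    nG (completeBipartiteGraph (Fin a) (Fin b)) (Sum.inr y) (Sum.inl x) = a := by
  set G := completeBipartiteGraph (Fin a) (Fin b) with hG
  have hadj : G.Adj (Sum.inr y) (Sum.inl x) := by simp [hG, completeBipartiteGraph]
  have hset : {w | G.edist w (Sum.inr y) < G.edist w (Sum.inl x)}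
      = insert (Sum.inr y : Fin a ⊕ Fin b) (Sum.inl '' ({x}ᶜ)) := by
    ext w
    rcases w with z | y'
    · simp only [Set.mem_setOf_eq, Set.mem_insert_iff, Set.mem_image, Set.mem_compl_iff,
        Set.mem_singleton_iff]
      have h1 : G.edist (Sum.inl z) (Sum.inr y) = 1 :=
        edist_eq_one_iff_adj.mpr (by simp [hG, completeBipartiteGraph])
      rw [h1]
      constructor
      · intro h
        right
        refine ⟨z, ?_, rfl⟩
        rintro rfl
        rw [SimpleGraph.edist_self] at h
        simp at h
      · rintro (h | ⟨z', hz, h⟩)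
        · exact absurd h (by simp)
        · rcases Sum.inl.inj h with rfl
          have hne : (Sum.inl z' : Fin a ⊕ Fin b) ≠ Sum.inl x := by simpa using hz
          have h0 : G.edist (Sum.inl z') (Sum.inl x) ≠ 0 := by
            exact fun h => hne (edist_eq_zero_iff.mp h)
          have h1' : G.edist (Sum.inl z') (Sum.inl x) ≠ 1 := by
            exact fun h => by simpa [hG, completeBipartiteGraph] using edist_eq_one_iff_adj.mp h
          have : 1 ≤ G.edist (Sum.inl z') (Sum.inl x) :=
            Order.one_le_iff_pos.mpr (pos_iff_ne_zero.mpr h0)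
          exact lt_of_le_of_ne this (Ne.symm h1')
    · simp only [Set.mem_setOf_eq, Set.mem_insert_iff, Set.mem_image]
      constructor
      · intro h
        by_contra hne
        have hx : y' ≠ y := by
          intro h'; apply hne; left; rw [h']
        have h1 : G.edist (Sum.inr y') (Sum.inl x) = 1 :=
          edist_eq_one_iff_adj.mpr (by simp [hG, completeBipartiteGraph])
        rw [h1] at h
        have : G.edist (Sum.inr y') (Sum.inr y) = 0 := by
          exact ENat.lt_one_iff_eq_zero.mp h
        rw [edist_eq_zero_iff] at this
        simp at this
        exact hx this
      · rintro (h | ⟨z, hz, h⟩)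
        · rcases Sum.inr.inj h with rfl
          rw [SimpleGraph.edist_self, edist_eq_one_iff_adj.mpr hadj]
          norm_num
        · exact absurd h (by simp)
  rw [nG, hset, Set.ncard_insert_of_notMem (by simp),
    Set.ncard_image_of_injective _ Sum.inl_injective]
  have : ({x}ᶜ : Set (Fin a)).ncard = a - 1 := by
    rw [Set.compl_eq_univ_diff, Set.ncard_diff (Set.subset_univ _), Set.ncard_univ,
      Set.ncard_singleton]
    simp
  rw [this]
  have ha : 0 < a := x.pos
  omega

open SimpleGraph in
lemma edgeFinset_cbg (a b : ℕ) :
    (Set.toFinite (completeBipartiteGraph (Fin a) (Fin b)).edgeSet).toFinset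
      = Finset.image (fun p : Fin a × Fin b => s(Sum.inl p.1, Sum.inr p.2)) Finset.univ := by
  ext e
  induction e using Sym2.ind with
  | _ u v =>
    rw [Set.Finite.mem_toFinset, SimpleGraph.mem_edgeSet, Finset.mem_image]
    rcases u with x | y <;> rcases v with x' | y'
    · simp [completeBipartiteGraph, Sym2.eq_iff]
    · simp only [Finset.mem_univ, true_and, Prod.exists, Sym2.eq_iff]
      constructor
      · intro _; exact ⟨x, y', Or.inl ⟨rfl, rfl⟩⟩
      · intro _; simp [completeBipartiteGraph]
    · simp only [Finset.mem_univ, true_and, Prod.exists, Sym2.eq_iff]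
      constructor
      · intro _; exact ⟨x', y, Or.inr ⟨rfl, rfl⟩⟩
      · intro _; simp [completeBipartiteGraph]
    · simp [completeBipartiteGraph, Sym2.eq_iff]

open SimpleGraph in
lemma mostar_cbg (a b : ℕ) :
    mostar (completeBipartiteGraph (Fin a) (Fin b)) = (a : ℤ) * b * |(b : ℤ) - a| := by
  rw [mostar, edgeFinset_cbg, Finset.sum_image]
  · have : ∀ p : Fin a × Fin b,
        Sym2.lift ⟨fun u v => |(nG (completeBipartiteGraph (Fin a) (Fin b)) u v : ℤ)
            - (nG (completeBipartiteGraph (Fin a) (Fin b)) v u : ℤ)|,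
          fun _ _ => abs_sub_comm _ _⟩ s(Sum.inl p.1, Sum.inr p.2) = |(b : ℤ) - a| := by
      intro p
      rw [Sym2.lift_mk]
      simp [nG_left, nG_right]
    rw [Finset.sum_congr rfl fun p _ => this p, Finset.sum_const, Finset.card_univ]
    simp [mul_assoc]
  · intro p _ q _ h
    simpa [Sym2.eq_iff, Prod.ext_iff] using h



lemma Plow {n x c : ℝ} (hx0 : 0 ≤ x) (hcn : c ≤ n) (hxc : x ≤ c) (hc1 : c ≤ x + 1) :
    c*(n-c)*(n-2*c) - 13*n^2 ≤ x*(n-x)*(n-2*x) := by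
  have hn0 : 0 ≤ n := le_trans (le_trans hx0 hxc) hcn
  have hxn : x ≤ n := le_trans hxc hcn
  have hc0 : 0 ≤ c := le_trans hx0 hxc
  set B : ℝ := 2*(c^2+c*x+x^2) - 3*n*(c+x) + n^2 with hB
  have hBup : B ≤ 7*n^2 := by nlinarith [mul_nonneg hc0 hx0, mul_nonneg hx0 hn0, mul_nonneg hc0 hn0]
  have hBlo : -(6*n^2) ≤ B := by nlinarith [sq_nonneg (c+x), mul_nonneg hc0 hx0]
  have key : c*(n-c)*(n-2*c) - x*(n-x)*(n-2*x) = (c-x)*B := by rw [hB]; ring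
  have hd0 : 0 ≤ c - x := sub_nonneg.2 hxc
  have hd1 : c - x ≤ 1 := by linarith
  have h1 : (c-x)*B ≤ 13*n^2 := by
    rcases le_or_gt B 0 with h | h
    · nlinarith
    · nlinarith [mul_le_mul_of_nonneg_left hBup hd0, mul_le_mul_of_nonneg_right hd1 h.le]
  linarith [key ▸ h1]

lemma Phigh {n x c : ℝ} (hx0 : 0 ≤ x) (hcn : c ≤ n) (hxc : x ≤ c) (hc1 : c ≤ x + 1) :
    x*(n-x)*(n-2*x) ≤ c*(n-c)*(n-2*c) + 13*n^2 := by
  have hn0 : 0 ≤ n := le_trans (le_trans hx0 hxc) hcn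
  have hxn : x ≤ n := le_trans hxc hcn
  have hc0 : 0 ≤ c := le_trans hx0 hxc
  set B : ℝ := 2*(c^2+c*x+x^2) - 3*n*(c+x) + n^2 with hB
  have hBlo : -(6*n^2) ≤ B := by nlinarith [sq_nonneg (c+x), mul_nonneg hc0 hx0]
  have key : x*(n-x)*(n-2*x) - c*(n-c)*(n-2*c) = -((c-x)*B) := by rw [hB]; ring
  have hd0 : 0 ≤ c - x := sub_nonneg.2 hxc
  have hd1 : c - x ≤ 1 := by linarith
  have h1 : -(13*n^2) ≤ (c-x)*B := by
    rcases le_or_gt B 0 with h | h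
    · nlinarith [mul_le_mul_of_nonneg_right hd1 (neg_nonneg.2 h), sq_nonneg n]
    · nlinarith
  linarith [key ▸ (neg_le_neg h1)]


set_option maxHeartbeats 1000000 in
/-- For `α₁ = (1 - 1/√3)/2` there is `N` such that for all `n ≥ N` the Mostar index of
`K_{⌊α₁n⌋, n-⌊α₁n⌋}` is strictly larger than that of `K_{⌊n/3⌋, n-⌊n/3⌋}`. -/
theorem mostar_completeBipartite_floor_gt :
    ∃ N : ℕ, 0 < N ∧ ∀ n : ℕ, N ≤ n →
      mostar (completeBipartiteGraph
          (Fin ⌊((1 - 1 / Real.sqrt 3) / 2) * (n : ℝ)⌋₊)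
          (Fin (n - ⌊((1 - 1 / Real.sqrt 3) / 2) * (n : ℝ)⌋₊)))
        > mostar (completeBipartiteGraph (Fin (n / 3)) (Fin (n - n / 3))) := by
  refine ⟨2000, by norm_num, fun n hn => ?_⟩
  have hn' : (2000 : ℝ) ≤ n := by exact_mod_cast hn
  have hnn : (0:ℝ) ≤ n := by linarith
  set s : ℝ := Real.sqrt 3 with hs
  have hs2 : s^2 = 3 := Real.sq_sqrt (by norm_num)
  have hs0 : 0 < s := Real.sqrt_pos.mpr (by norm_num)
  have hslo : 1.73 < s := by nlinarith
  have hshi : s < 1.74 := by nlinarith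
  set α : ℝ := (1 - 1/s)/2 with hα
  have hαlo : 0.21 < α := by
    rw [hα]
    have h1 : 1/s < 1/1.73 := by
      apply one_div_lt_one_div_of_lt
      · norm_num
      · linarith
    nlinarith
  have hαhi : α < 0.22 := by
    rw [hα]
    have h1 : 1/1.74 < 1/s := by
      apply one_div_lt_one_div_of_lt
      · positivity
      · linarith
    nlinarith
  set A : ℕ := ⌊α * (n:ℝ)⌋₊ with hA
  set B : ℕ := n / 3 with hB
  have hAle : (A:ℝ) ≤ α * n := Nat.floor_le (by positivity)
  have hAgt : α * n < A + 1 := Nat.lt_floor_add_one _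
  have h2A : 2 * A ≤ n := by
    have : (2 * A : ℝ) ≤ 2 * (α * n) := by linarith
    have h : (2 * A : ℝ) ≤ n := by nlinarith
    exact_mod_cast h
  have hAn : A ≤ n := by omega
  have h3B : 3 * B ≤ n ∧ n < 3 * B + 3 := by constructor <;> omega
  have h2B : 2 * B ≤ n := by omega
  have hBn : B ≤ n := by omega
  rw [mostar_cbg, mostar_cbg]
  have e1 : ((n - A : ℕ) : ℤ) = (n:ℤ) - A := by omega
  have e2 : ((n - B : ℕ) : ℤ) = (n:ℤ) - B := by omega
  rw [e1, e2, abs_of_nonneg (show (0:ℤ) ≤ (n:ℤ) - A - A by omega),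
    abs_of_nonneg (show (0:ℤ) ≤ (n:ℤ) - B - B by omega)]
  have hBle : (B:ℝ) ≤ (n:ℝ)/3 := by
    have := h3B.1
    have : (3 * B : ℝ) ≤ n := by exact_mod_cast this
    linarith
  have hBgt : (n:ℝ)/3 < B + 1 := by
    have := h3B.2
    have : (n:ℝ) < 3 * B + 3 := by exact_mod_cast this
    linarith
  -- real inequality
  have key : ((B:ℝ)) * ((n:ℝ) - B) * ((n:ℝ) - 2*B) < (A:ℝ) * ((n:ℝ) - A) * ((n:ℝ) - 2*A) := by
    have hc1 : α * n ≤ (n:ℝ) := by nlinarith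
    have hlow := Plow (by positivity) hc1 hAle (by linarith)
    have hd1 : (n:ℝ)/3 ≤ (n:ℝ) := by linarith
    have hhigh := Phigh (by positivity) hd1 hBle (by linarith)
    have hinv : (1:ℝ)/s = s/3 := by
      rw [div_eq_div_iff (ne_of_gt hs0) (by norm_num : (3:ℝ) ≠ 0)]
      nlinarith [hs2]
    have hα' : α = (1 - s/3)/2 := by rw [hα, hinv]
    have hid : (α*n)*((n:ℝ) - α*n)*((n:ℝ) - 2*(α*n)) = s * (n:ℝ)^3 / 18 := by
      rw [hα']
      linear_combination (-(n:ℝ)^3*s/108) * hs2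
    have hid2 : ((n:ℝ)/3)*((n:ℝ) - (n:ℝ)/3)*((n:ℝ) - 2*((n:ℝ)/3)) = 2*(n:ℝ)^3/27 := by ring
    rw [hid] at hlow
    rw [hid2] at hhigh
    have final : 2*(n:ℝ)^3/27 + 13*(n:ℝ)^2 < s*(n:ℝ)^3/18 - 13*(n:ℝ)^2 := by
      have h1 : 1.73 * (n:ℝ)^3 ≤ s * (n:ℝ)^3 := by
        apply mul_le_mul_of_nonneg_right (le_of_lt hslo) (by positivity)
      have h2 : 2000 * (n:ℝ)^2 ≤ (n:ℝ)^3 := by nlinarith [sq_nonneg (n:ℝ)]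
      nlinarith [sq_nonneg (n:ℝ)]
    linarith
  have key' : ((B:ℝ)) * ((n:ℝ) - B) * ((n:ℝ) - B - B) < (A:ℝ) * ((n:ℝ) - A) * ((n:ℝ) - A - A) := by
    ring_nf at key ⊢; linarith
  exact_mod_cast key'
end

section
/- Let G be a split graph that arises from the disjoint union of a clique C and an independent set I by adding edges, each joining a vertex of C to a vertex of I. Then for every edge uu' of G with u, u' ∈ C, one has |n_G(u,u') − n_G(u',u)| = |d_G(u) − d_G(u')|. -/
open Finset

theorem Finset.card_sdiff_sub_card_sdiff {α : Type*} [DecidableEq α] (s t : Finset α) :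
    (#(s \ t) : ℤ) - #(t \ s) = #s - #t := by
  have hs := card_sdiff_add_card_inter s t
  have ht := card_sdiff_add_card_inter t s
  rw [inter_comm] at ht
  omega

namespace SimpleGraph

variable {V : Type*} {G : SimpleGraph V} {u u' w : V}

theorem edist_lt_edist_of_adj_of_not_adj (hwu : G.Adj w u) (hwu' : ¬G.Adj w u') (hne : w ≠ u') :
    G.edist w u < G.edist w u' := by
  rw [edist_eq_one_iff_adj.2 hwu, ← not_le, edist_le_one_iff_adj_or_eq]
  tauto

theorem edist_le_two_of_isClique_of_isIndepSet_compl {C : Set V} (hC : G.IsClique C)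
    (hI : G.IsIndepSet Cᶜ) {v v' : V} (hv : v ∈ C) (hv' : v' ∈ C) (h : G.Reachable w v) :
    G.edist w v' ≤ 2 := by
  obtain ⟨x, hxC, hwx⟩ : ∃ x ∈ C, G.edist w x ≤ 1 := by
    by_cases hw : w ∈ C
    · exact ⟨w, hw, by simp⟩
    obtain ⟨p⟩ := h
    have hadj := p.adj_snd (p.not_nil_of_ne (ne_of_mem_of_not_mem hv hw).symm)
    exact ⟨p.getVert 1, by_contra fun hx ↦ hI hw hx hadj.ne hadj,
      (edist_eq_one_iff_adj.2 hadj).le⟩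
  have hxv' : G.edist x v' ≤ 1 := by
    rw [edist_le_one_iff_adj_or_eq]
    by_cases hx : x = v'
    · exact .inr hx
    · exact .inl (hC hxC hv' hx)
  calc G.edist w v' ≤ G.edist w x + G.edist x v' := G.edist_triangle
    _ ≤ 1 + 1 := add_le_add hwx hxv'
    _ = 2 := one_add_one_eq_two

theorem edist_lt_edist_iff_of_isClique_of_isIndepSet_compl {C : Set V} (hC : G.IsClique C)
    (hI : G.IsIndepSet Cᶜ) (hu : u ∈ C) (hu' : u' ∈ C) (hwu : w ≠ u) (hwu' : w ≠ u') :
    G.edist w u < G.edist w u' ↔ G.Adj w u ∧ ¬G.Adj w u' := by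
  refine ⟨fun h ↦ ⟨?_, fun hadj ↦ ?_⟩, fun h ↦ edist_lt_edist_of_adj_of_not_adj h.1 h.2 hwu'⟩
  · have h2 := edist_le_two_of_isClique_of_isIndepSet_compl hC hI hu hu'
      (edist_ne_top_iff_reachable.1 h.ne_top)
    have h1 : G.edist w u ≤ 1 := by
      rw [← ENat.lt_add_one_iff ENat.one_ne_top, one_add_one_eq_two]
      exact h.trans_le h2
    exact (edist_le_one_iff_adj_or_eq.1 h1).resolve_right hwu
  · rw [edist_eq_one_iff_adj.2 hadj, Order.lt_one_iff, edist_eq_zero_iff] at h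
    exact hwu h

variable [Fintype V] [DecidableEq V] [DecidableRel G.Adj]

theorem setOf_edist_lt_edist_eq_map_swap {C : Set V} (hC : G.IsClique C)
    (hI : G.IsIndepSet Cᶜ) (hu : u ∈ C) (hu' : u' ∈ C) (huu' : G.Adj u u') :
    {w | G.edist w u < G.edist w u'} =
      ((G.neighborFinset u \ G.neighborFinset u').map (Equiv.swap u u').toEmbedding : Set V) := by
  ext w
  simp only [Set.mem_ofPred_eq, coe_map, Equiv.coe_toEmbedding, Equiv.image_eq_preimage_symm,
    Equiv.symm_swap, Set.mem_preimage, mem_coe, mem_sdiff, mem_neighborFinset]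
  rcases eq_or_ne w u with rfl | hwu
  · simp [huu', edist_eq_one_iff_adj.2 huu']
  rcases eq_or_ne w u' with rfl | hwu'
  · simp
  rw [Equiv.swap_apply_of_ne_of_ne hwu hwu',
    edist_lt_edist_iff_of_isClique_of_isIndepSet_compl hC hI hu hu' hwu hwu', G.adj_comm u,
    G.adj_comm u']

theorem nG_eq_card_sdiff {C : Set V} (hC : G.IsClique C) (hI : G.IsIndepSet Cᶜ) (hu : u ∈ C)
    (hu' : u' ∈ C) (huu' : G.Adj u u') :
    nG G u u' = #(G.neighborFinset u \ G.neighborFinset u') := by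
  rw [nG, setOf_edist_lt_edist_eq_map_swap hC hI hu hu' huu', Set.ncard_coe_finset, card_map]

theorem nG_sub_nG_eq_degree_sub_degree {C : Set V} (hC : G.IsClique C) (hI : G.IsIndepSet Cᶜ)
    (hu : u ∈ C) (hu' : u' ∈ C) (huu' : G.Adj u u') :
    (nG G u u' : ℤ) - nG G u' u = G.degree u - G.degree u' := by
  rw [nG_eq_card_sdiff hC hI hu hu' huu', nG_eq_card_sdiff hC hI hu' hu huu'.symm,
    card_sdiff_sub_card_sdiff, card_neighborFinset_eq_degree, card_neighborFinset_eq_degree]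

end SimpleGraph

/-- In a split graph (clique `C`, independent set `Cᶜ`, cross edges only between them),
for every edge `uu'` with `u, u' ∈ C`: `|nG(u,u') - nG(u',u)| = |d(u) - d(u')|`. -/
theorem nG_clique_edge {V : Type*} [Fintype V] [DecidableEq V] (G : SimpleGraph V)
    [DecidableRel G.Adj] (C : Finset V)
    (hclique : ∀ u ∈ C, ∀ v ∈ C, u ≠ v → G.Adj u v)
    (hindep : ∀ u ∉ C, ∀ v ∉ C, ¬ G.Adj u v)
    (u u' : V) (hu : u ∈ C) (hu' : u' ∈ C) (huu' : G.Adj u u') :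
    |(nG G u u' : ℤ) - (nG G u' u : ℤ)| = |(G.degree u : ℤ) - (G.degree u' : ℤ)| := by
  have hC : G.IsClique (C : Set V) := fun v hv v' hv' hne ↦ hclique v hv v' hv' hne
  have hI : G.IsIndepSet (C : Set V)ᶜ := fun v hv v' hv' _ ↦ hindep v hv v' hv'
  rw [SimpleGraph.nG_sub_nG_eq_degree_sub_degree hC hI hu hu' huu']
end

section
/- Let G be a split graph of order n that arises from the disjoint union of a clique C and an independent set I by adding edges, each joining a vertex of C to a vertex of I. Then for every edge uv of G with u ∈ C and v ∈ I, one has n_G(v,u) = 1 and n_G(u,v) ≤ n − d_G(v), and consequently |n_G(u,v) − n_G(v,u)| ≤ n − d_G(v) − 1. -/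
namespace SimpleGraph

variable {V : Type*} {G : SimpleGraph V} {u v w : V}

/-- A shortest walk from `v` leaves through a neighbour `x` of `v`; since `x = u` or `x ~ u`,
the same walk with its first vertex replaced by `u` (or simply dropped) starts at `u`. -/
lemma edist_le_edist_of_neighborSet_subset (h : G.neighborSet v ⊆ insert u (G.neighborSet u))
    (hw : w ≠ v) : G.edist w u ≤ G.edist w v := by
  rw [edist_comm, edist_comm (u := w)]
  by_cases htop : G.edist v w = ⊤
  · exact htop ▸ le_top
  obtain ⟨p, hp⟩ := G.exists_walk_of_edist_ne_top htop
  cases p with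
  | nil => exact absurd rfl hw
  | @cons _ x _ hvx q =>
    rw [← hp, Walk.length_cons]
    rcases h hvx with rfl | hux
    · exact q.edist_le.trans (by norm_cast; omega)
    · exact (q.cons hux).edist_le

lemma one_le_edist_of_ne (h : u ≠ v) : 1 ≤ G.edist u v :=
  Order.one_le_iff_pos.mpr (edist_pos_of_ne h)

end SimpleGraph

open SimpleGraph

section nG

variable {V : Type*} [Fintype V] {G : SimpleGraph V} {u v : V}

lemma nG_pos (huv : u ≠ v) : 0 < nG G u v := by
  refine (Set.ncard_pos).mpr ⟨u, ?_⟩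
  simpa [edist_self] using edist_pos_of_ne huv

lemma nG_eq_one_of_neighborSet_subset (huv : u ≠ v)
    (h : G.neighborSet v ⊆ insert u (G.neighborSet u)) : nG G v u = 1 := by
  suffices {w | G.edist w v < G.edist w u} = {v} by rw [nG, this, Set.ncard_singleton]
  ext w
  simp only [Set.mem_ofPred_eq, Set.mem_singleton_iff]
  refine ⟨fun hlt => ?_, fun hw => ?_⟩
  · by_contra hw
    exact (edist_le_edist_of_neighborSet_subset h hw).not_gt hlt
  · simpa [hw, edist_self] using edist_pos_of_ne huv.symm

lemma nG_add_degree_le_card [DecidableRel G.Adj] (huv : G.Adj u v) :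
    nG G u v + G.degree v ≤ Fintype.card V := by
  classical
  set T := insert v ((G.neighborFinset v).erase u)
  have hT : T.card = G.degree v := by
    have hdeg : 0 < G.degree v := (G.degree_pos_iff_exists_adj v).mpr ⟨u, huv.symm⟩
    rw [Finset.card_insert_of_notMem (by simp), Finset.card_erase_of_mem (by simpa using huv.symm),
      card_neighborFinset_eq_degree, Nat.sub_add_cancel hdeg]
  have hsub : {w | G.edist w u < G.edist w v} ⊆ ↑Tᶜ := by
    intro w hw
    rw [Finset.coe_compl, Set.mem_compl_iff]
    intro hwT
    simp only [T, Finset.mem_coe, Finset.mem_insert, Finset.mem_erase, mem_neighborFinset] at hwT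
    rcases hwT with rfl | ⟨hwu, hvw⟩
    · rw [Set.mem_ofPred_eq, edist_self] at hw
      exact not_lt_zero hw
    · rw [Set.mem_ofPred_eq, edist_eq_one_iff_adj.mpr hvw.symm] at hw
      exact (one_le_edist_of_ne hwu).not_gt hw
  calc nG G u v + G.degree v ≤ Tᶜ.card + T.card := by
        rw [hT, ← Set.ncard_coe_finset]; gcongr; exact Set.ncard_le_ncard hsub
    _ = Fintype.card V := by rw [Finset.card_compl, Nat.sub_add_cancel (Finset.card_le_univ T)]

end nG

theorem nG_cross_edge_general {V : Type*} [Fintype V] (G : SimpleGraph V)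
    [DecidableRel G.Adj] (n : ℕ) (hn : Fintype.card V = n) (C : Finset V)
    (hclique : ∀ u ∈ C, ∀ v ∈ C, u ≠ v → G.Adj u v)
    (hindep : ∀ u ∉ C, ∀ v ∉ C, ¬ G.Adj u v)
    (u v : V) (hu : u ∈ C) (hv : v ∉ C) (huv : G.Adj u v) :
    nG G v u = 1 ∧ (nG G u v : ℤ) ≤ (n : ℤ) - (G.degree v : ℤ) ∧
      |(nG G u v : ℤ) - (nG G v u : ℤ)| ≤ (n : ℤ) - (G.degree v : ℤ) - 1 := by
  have hnbr : G.neighborSet v ⊆ insert u (G.neighborSet u) := by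
    intro x hvx
    have hx : x ∈ C := by_contra fun hx => hindep v hv x hx hvx
    by_cases hxu : x = u
    · exact Or.inl hxu
    · exact Or.inr (hclique u hu x hx (Ne.symm hxu))
  have hvu : nG G v u = 1 := nG_eq_one_of_neighborSet_subset huv.ne hnbr
  have hcard := nG_add_degree_le_card huv
  have hpos := nG_pos (G := G) huv.ne
  refine ⟨hvu, by omega, ?_⟩
  rw [hvu, abs_of_nonneg (by omega)]
  omega

/-- In a split graph of order `n` (clique `C`, independent set `Cᶜ`), for every edge `uv`
with `u ∈ C` and `v ∉ C`: `nG(v,u) = 1`, `nG(u,v) ≤ n - d(v)`, and hence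
`|nG(u,v) - nG(v,u)| ≤ n - d(v) - 1`. -/
theorem nG_cross_edge {V : Type*} [Fintype V] [DecidableEq V] (G : SimpleGraph V)
    [DecidableRel G.Adj] (n : ℕ) (hn : Fintype.card V = n) (C : Finset V)
    (hclique : ∀ u ∈ C, ∀ v ∈ C, u ≠ v → G.Adj u v)
    (hindep : ∀ u ∉ C, ∀ v ∉ C, ¬ G.Adj u v)
    (u v : V) (hu : u ∈ C) (hv : v ∉ C) (huv : G.Adj u v) :
    nG G v u = 1 ∧ (nG G u v : ℤ) ≤ (n : ℤ) - (G.degree v : ℤ) ∧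
      |(nG G u v : ℤ) - (nG G v u : ℤ)| ≤ (n : ℤ) - (G.degree v : ℤ) - 1 :=
  nG_cross_edge_general G n hn C hclique hindep u v hu hv huv
end

section
/- Let G be a split graph of order n that arises from the disjoint union of a clique C of order c and an independent set I of order n−c ≥ 1 by adding m edges, each joining a vertex of C to a vertex of I. Then Σ_{{u,u'}⊆C, u≠u'} |d_G(u) − d_G(u')| ≤ c·m − m²/(n−c). -/
/-!
For `u ∈ C` let `b u` be the number of neighbours of `u` outside `C`, so that
`d(u) = c - 1 + b u`, `∑ b = m` and `0 ≤ b u ≤ M := n - c`. Since `b u * b v / M ≤ min (b u) (b v)`,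
`|b u - b v| ≤ b u + b v - 2 b u b v / M`. The right-hand side is nonnegative, so the sum over
distinct pairs is at most the sum over all of `C × C`, which equals `2 c m - 2 m² / M`.
-/

open Finset

theorem abs_sub_le_add_sub_two_mul_div {x y M : ℝ} (hx : 0 ≤ x) (hxM : x ≤ M) (hy : 0 ≤ y)
    (hyM : y ≤ M) : |x - y| ≤ x + y - 2 * (x * y) / M := by
  have hle_y : x * y / M ≤ y := by
    rw [mul_div_right_comm]
    exact mul_le_of_le_one_left hy (div_le_one_of_le₀ hxM (hx.trans hxM))
  have hle_x : x * y / M ≤ x := by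
    rw [mul_div_assoc]
    exact mul_le_of_le_one_right hx (div_le_one_of_le₀ hyM (hy.trans hyM))
  rw [mul_div_assoc, abs_sub_le_iff]
  constructor <;> linarith

theorem Finset.sum_offDiag_abs_sub_le {ι : Type*} [DecidableEq ι] (s : Finset ι) (x : ι → ℝ)
    {M : ℝ} (hx : ∀ i ∈ s, 0 ≤ x i) (hxM : ∀ i ∈ s, x i ≤ M) :
    (1 / 2 : ℝ) * ∑ p ∈ s.offDiag, |x p.1 - x p.2|
      ≤ #s * ∑ i ∈ s, x i - (∑ i ∈ s, x i) ^ 2 / M := by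
  calc (1 / 2 : ℝ) * ∑ p ∈ s.offDiag, |x p.1 - x p.2|
      ≤ (1 / 2 : ℝ) * ∑ p ∈ s ×ˢ s, |x p.1 - x p.2| := by
        gcongr
        rw [← diag_union_offDiag]
        exact subset_union_right
    _ ≤ (1 / 2 : ℝ) * ∑ p ∈ s ×ˢ s, (x p.1 + x p.2 - 2 * (x p.1 * x p.2) / M) := by
        gcongr with p hp
        rw [mem_product] at hp
        exact abs_sub_le_add_sub_two_mul_div (hx _ hp.1) (hxM _ hp.1) (hx _ hp.2) (hxM _ hp.2)
    _ = #s * ∑ i ∈ s, x i - (∑ i ∈ s, x i) ^ 2 / M := by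
        simp only [sum_product, sum_sub_distrib, sum_add_distrib, sum_const, nsmul_eq_mul,
          ← sum_div, ← mul_sum, ← sum_mul]
        ring

namespace SimpleGraph

variable {V : Type*} [Fintype V] [DecidableEq V] (G : SimpleGraph V) [DecidableRel G.Adj]
  {C : Finset V}

theorem degree_add_one_of_isClique (hC : G.IsClique (C : Set V)) {u : V} (hu : u ∈ C) :
    G.degree u + 1 = #C + #(G.neighborFinset u \ C) := by
  have hinter : G.neighborFinset u ∩ C = C.erase u := by
    ext w
    simp only [mem_inter, mem_neighborFinset, mem_erase]
    exact ⟨fun ⟨hadj, hw⟩ => ⟨hadj.ne', hw⟩, fun ⟨hne, hw⟩ => ⟨hC hu hw hne.symm, hw⟩⟩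
  rw [← card_neighborFinset_eq_degree, ← card_inter_add_card_sdiff (G.neighborFinset u) C,
    hinter, ← card_erase_add_one hu]
  ring

theorem card_neighborFinset_sdiff_le (C : Finset V) (u : V) :
    #(G.neighborFinset u \ C) ≤ Fintype.card V - #C := by
  rw [← card_compl]
  exact card_le_card fun w hw => mem_compl.mpr (mem_sdiff.mp hw).2

theorem sum_card_neighborFinset_sdiff (hindep : G.IsIndepSet ((C : Set V)ᶜ)) :
    ∑ u ∈ C, #(G.neighborFinset u \ C) = #{e ∈ G.edgeFinset | ∃ v ∈ e, v ∉ C} := by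
  rw [← card_sigma]
  have mem_of_adj {x y : V} (h : G.Adj x y) (hy : y ∉ C) : x ∈ C :=
    by_contra fun hx => hindep hx hy h.ne h
  refine card_nbij (fun p => s(p.1, p.2)) ?_ ?_ ?_
  · rintro ⟨u, w⟩ hp
    simp only [mem_coe, mem_sigma, mem_sdiff, mem_neighborFinset] at hp
    simp only [mem_coe, mem_filter, mem_edgeFinset, mem_edgeSet]
    exact ⟨hp.2.1, w, Sym2.mem_mk_right u w, hp.2.2⟩
  · rintro ⟨u, w⟩ hp ⟨u', w'⟩ hp' h
    simp only [coe_sigma, Set.mem_sigma_iff, mem_coe, mem_sdiff] at hp hp'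
    rcases Sym2.eq_iff.mp h with ⟨rfl, rfl⟩ | ⟨rfl, rfl⟩
    · rfl
    · exact absurd hp.1 hp'.2.2
  · intro e he
    induction e using Sym2.ind with | _ x y => ?_
    simp only [coe_filter, mem_edgeFinset, mem_edgeSet, Set.mem_ofPred_eq] at he
    obtain ⟨hadj, v, hv, hvC⟩ := he
    rcases Sym2.mem_iff.mp hv with rfl | rfl
    · refine ⟨⟨y, v⟩, ?_, Sym2.eq_swap⟩
      simpa [hvC] using ⟨mem_of_adj hadj.symm hvC, hadj.symm⟩
    · exact ⟨⟨x, v⟩, by simpa [hvC] using ⟨mem_of_adj hadj hvC, hadj⟩, rfl⟩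

end SimpleGraph

theorem sum_degree_diff_le_general {V : Type*} [Fintype V] [DecidableEq V] (G : SimpleGraph V)
    [DecidableRel G.Adj] (n c m : ℕ) (hn : Fintype.card V = n)
    (C : Finset V) (hC : C.card = c)
    (hclique : ∀ u ∈ C, ∀ v ∈ C, u ≠ v → G.Adj u v)
    (hindep : ∀ u ∉ C, ∀ v ∉ C, ¬ G.Adj u v)
    (hm : (G.edgeFinset.filter fun e => ∃ v ∈ e, v ∉ C).card = m) :
    (1 / 2 : ℝ) * ∑ p ∈ C.offDiag, |(G.degree p.1 : ℝ) - (G.degree p.2 : ℝ)|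
      ≤ (c : ℝ) * (m : ℝ) - (m : ℝ) ^ 2 / ((n : ℝ) - (c : ℝ)) := by
  set b : V → ℝ := fun u => #(G.neighborFinset u \ C)
  have hdegree_sub {u v : V} (hu : u ∈ C) (hv : v ∈ C) :
      (G.degree u : ℝ) - G.degree v = b u - b v := by
    have hu' := congrArg ((↑) : ℕ → ℝ) (G.degree_add_one_of_isClique hclique hu)
    have hv' := congrArg ((↑) : ℕ → ℝ) (G.degree_add_one_of_isClique hclique hv)
    push_cast at hu' hv'
    linarith
  have hb_sum : ∑ u ∈ C, b u = m := by
    rw [← hm, ← G.sum_card_neighborFinset_sdiff fun u hu v hv _ => hindep u hu v hv]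
    push_cast
    rfl
  have hb_le (u : V) : b u ≤ n - c := by
    rw [← hn, ← hC, ← Nat.cast_sub (card_le_univ C)]
    exact Nat.cast_le.mpr (G.card_neighborFinset_sdiff_le C u)
  have key := sum_offDiag_abs_sub_le C b (fun _ _ => Nat.cast_nonneg _) fun u _ => hb_le u
  rw [hb_sum, hC] at key
  calc _ = (1 / 2 : ℝ) * ∑ p ∈ C.offDiag, |b p.1 - b p.2| := by
        congr 1
        refine sum_congr rfl fun p hp => ?_
        obtain ⟨hp₁, hp₂, -⟩ := mem_offDiag.mp hp
        rw [hdegree_sub hp₁ hp₂]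
    _ ≤ _ := key

/-- In a split graph of order `n` (clique `C` of order `c`, independent set `Cᶜ` of order
`n - c ≥ 1`, `m` cross edges), the sum of `|d(u) - d(u')|` over unordered pairs of distinct
vertices of `C` is at most `c·m - m²/(n-c)`. -/
theorem sum_degree_diff_le {V : Type*} [Fintype V] [DecidableEq V] (G : SimpleGraph V)
    [DecidableRel G.Adj] (n c m : ℕ) (hn : Fintype.card V = n)
    (C : Finset V) (hC : C.card = c)
    (hclique : ∀ u ∈ C, ∀ v ∈ C, u ≠ v → G.Adj u v)
    (hindep : ∀ u ∉ C, ∀ v ∉ C, ¬ G.Adj u v)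
    (hm : (G.edgeFinset.filter fun e => ∃ v ∈ e, v ∉ C).card = m)
    (hcn : c < n) :
    (1 / 2 : ℝ) * ∑ p ∈ C.offDiag, |(G.degree p.1 : ℝ) - (G.degree p.2 : ℝ)|
      ≤ (c : ℝ) * (m : ℝ) - (m : ℝ) ^ 2 / ((n : ℝ) - (c : ℝ)) :=
  sum_degree_diff_le_general G n c m hn C hC hclique hindep hm
end

section
/- If d₁, d₂, …, d_k are integers with 0 ≤ d_i ≤ N for all i (where N is a positive integer) and m = d₁ + ⋯ + d_k, then Σ_{1 ≤ i < j ≤ k} |d_i − d_j| ≤ k·m − m²/N. -/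
lemma half_sum_aux {k : ℕ} (g : Fin k × Fin k → ℝ)
    (hsymm : ∀ p : Fin k × Fin k, g (p.2, p.1) = g p)
    (hdiag : ∀ i : Fin k, g (i, i) = 0) :
    2 * ∑ p ∈ Finset.univ.filter (fun p : Fin k × Fin k => p.1 < p.2), g p
      = ∑ p : Fin k × Fin k, g p := by
  have h1 := Finset.sum_filter_add_sum_filter_not Finset.univ
    (fun p : Fin k × Fin k => p.1 < p.2) g
  have h2 := Finset.sum_filter_add_sum_filter_not
    (Finset.univ.filter (fun p : Fin k × Fin k => ¬ p.1 < p.2))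
    (fun p : Fin k × Fin k => p.2 < p.1) g
  have hset : ((Finset.univ.filter (fun p : Fin k × Fin k => ¬ p.1 < p.2)).filter
      (fun p : Fin k × Fin k => p.2 < p.1))
      = Finset.univ.filter (fun p : Fin k × Fin k => p.2 < p.1) := by
    rw [Finset.filter_filter]
    apply Finset.filter_congr
    intro p _
    constructor
    · rintro ⟨_, h⟩; exact h
    · intro h; exact ⟨not_lt_of_gt h, h⟩
  have hzero : ∑ p ∈ (Finset.univ.filter (fun p : Fin k × Fin k => ¬ p.1 < p.2)).filter
      (fun p : Fin k × Fin k => ¬ p.2 < p.1), g p = 0 := by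
    apply Finset.sum_eq_zero
    intro p hp
    simp only [Finset.mem_filter] at hp
    have : p.1 = p.2 := le_antisymm (not_lt.mp hp.2) (not_lt.mp hp.1.2)
    have : p = (p.1, p.1) := by rw [Prod.ext_iff]; exact ⟨rfl, this.symm⟩
    rw [this, hdiag]
  have hswap : ∑ p ∈ Finset.univ.filter (fun p : Fin k × Fin k => p.2 < p.1), g p
      = ∑ p ∈ Finset.univ.filter (fun p : Fin k × Fin k => p.1 < p.2), g p := by
    apply Finset.sum_nbij' (fun p => (p.2, p.1)) (fun p => (p.2, p.1)) <;>
      simp +contextual [hsymm]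
  rw [hset, hswap, hzero] at h2
  linarith [h1, h2]

/-- If `0 ≤ dᵢ ≤ N` are integers with sum `m`, then
`∑_{i<j} |dᵢ - dⱼ| ≤ k·m - m²/N` (over the reals). -/
theorem sum_abs_diff_le (k N : ℕ) (hN : 0 < N) (d : Fin k → ℤ)
    (hd : ∀ i, 0 ≤ d i ∧ d i ≤ (N : ℤ)) (m : ℤ) (hm : m = ∑ i, d i) :
    ∑ p ∈ Finset.univ.filter (fun p : Fin k × Fin k => p.1 < p.2),
        |(d p.1 : ℝ) - (d p.2 : ℝ)|
      ≤ (k : ℝ) * (m : ℝ) - (m : ℝ) ^ 2 / (N : ℝ) := by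
  have hNR : (0:ℝ) < N := by exact_mod_cast hN
  set e : Fin k → ℝ := fun i => ((d i : ℤ) : ℝ) with he
  have he0 : ∀ i, 0 ≤ e i := fun i => by simp only [he]; exact_mod_cast (hd i).1
  have heN : ∀ i, e i ≤ N := fun i => by simp only [he]; exact_mod_cast (hd i).2
  have hM : ∑ i, e i = (m:ℝ) := by rw [hm]; push_cast; rfl
  have key : ∀ p : Fin k × Fin k,
      |e p.1 - e p.2| ≤ e p.1 + e p.2 - 2 * e p.1 * e p.2 / N := by
    intro p
    have h1 : 2 * e p.1 * e p.2 / N ≤ 2 * e p.2 := by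
      rw [div_le_iff₀ hNR]; nlinarith [he0 p.2, heN p.1]
    have h2 : 2 * e p.1 * e p.2 / N ≤ 2 * e p.1 := by
      rw [div_le_iff₀ hNR]; nlinarith [he0 p.1, heN p.2]
    rw [abs_sub_le_iff]
    constructor <;> linarith
  have hsym := half_sum_aux (fun p : Fin k × Fin k => |e p.1 - e p.2|)
    (fun p => by simp [abs_sub_comm]) (fun i => by simp)
  have hrow : ∀ i : Fin k, ∑ j, (e i + e j - 2 * e i * e j / N)
      = k * e i + (m:ℝ) - 2 * e i * (m:ℝ) / N := by
    intro i
    have h3 : ∑ j, 2 * e i * e j / N = 2 * e i * (m:ℝ) / N := by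
      rw [← Finset.sum_div, ← Finset.mul_sum, hM]
    rw [Finset.sum_sub_distrib, Finset.sum_add_distrib, Finset.sum_const, h3, hM]
    simp [mul_comm]
  have htot : ∑ p : Fin k × Fin k, (e p.1 + e p.2 - 2 * e p.1 * e p.2 / N)
      = 2 * k * (m:ℝ) - 2 * (m:ℝ)^2 / N := by
    rw [Fintype.sum_prod_type]
    rw [Finset.sum_congr rfl (fun i _ => hrow i)]
    rw [Finset.sum_sub_distrib, Finset.sum_add_distrib, Finset.sum_const]
    have ha : ∑ i, (k:ℝ) * e i = (k:ℝ) * (m:ℝ) := by rw [← Finset.mul_sum, hM]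
    have hb : ∑ i, 2 * e i * (m:ℝ) / N = 2 * (m:ℝ)^2 / N := by
      rw [← Finset.sum_div]
      congr 1
      calc ∑ i, 2 * e i * (m:ℝ) = ∑ i, (2 * (m:ℝ)) * e i := by
            apply Finset.sum_congr rfl; intros; ring
        _ = 2 * (m:ℝ) * ∑ i, e i := (Finset.mul_sum _ _ _).symm
        _ = 2 * (m:ℝ)^2 := by rw [hM]; ring
    rw [ha, hb]
    simp only [Finset.card_univ, Fintype.card_fin, nsmul_eq_mul]
    ring
  have hle : ∑ p : Fin k × Fin k, |e p.1 - e p.2|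
      ≤ ∑ p : Fin k × Fin k, (e p.1 + e p.2 - 2 * e p.1 * e p.2 / N) :=
    Finset.sum_le_sum (fun p _ => key p)
  have : 2 * ∑ p ∈ Finset.univ.filter (fun p : Fin k × Fin k => p.1 < p.2),
      |e p.1 - e p.2| ≤ 2 * k * (m:ℝ) - 2 * (m:ℝ)^2 / N := by
    rw [hsym]; linarith [hle, htot]
  have hfin : ∑ p ∈ Finset.univ.filter (fun p : Fin k × Fin k => p.1 < p.2),
      |e p.1 - e p.2| ≤ k * (m:ℝ) - (m:ℝ)^2 / N := by
    have h5 : 2 * (m:ℝ)^2 / N = 2 * ((m:ℝ)^2 / N) := by ring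
    rw [h5] at this
    linarith
  exact hfin
end

section
/- For every real α with 0 < α ≤ 1/2, there exist real numbers p, q ≥ 0 such that: (i) p + q ≥ 1 − 2α; (ii) if q < 2α then p + 2√(2qα) ≥ 1; (iii) if p < 2α²/(1−α) then 2√(2p(1−α)) + q ≥ 1; and (iv) α(1−α)(p+q) ≤ √3/18 = α₁(1−α₁)(1−2α₁), where α₁ = (1 − 1/√3)/2. -/
/-- For every `α ∈ (0, 1/2]` there is a feasible solution `(p,q)` of the optimization
problem (D') with `α(1-α)(p+q) ≤ √3/18 = α₁(1-α₁)(1-2α₁)`, `α₁ = (1 - 1/√3)/2`. -/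
theorem exists_feasible_dual (α : ℝ) (h0 : 0 < α) (h1 : α ≤ 1 / 2) :
    ∃ p q : ℝ, 0 ≤ p ∧ 0 ≤ q ∧
      1 - 2 * α ≤ p + q ∧
      (q < 2 * α → 1 ≤ p + 2 * Real.sqrt (2 * q * α)) ∧
      (p < 2 * α ^ 2 / (1 - α) → 1 ≤ 2 * Real.sqrt (2 * p * (1 - α)) + q) ∧
      α * (1 - α) * (p + q) ≤ Real.sqrt 3 / 18 := by
  have h1a : (0:ℝ) < 1 - α := by linarith
  have hobjA : α * (1 - α) * (1 - 2*α) ≤ Real.sqrt 3 / 18 := by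
    have h3 : Real.sqrt 3 ^ 2 = 3 := Real.sq_sqrt (by norm_num)
    have hpos : (0:ℝ) ≤ Real.sqrt 3 := Real.sqrt_nonneg 3
    have key : (0:ℝ) ≤ (Real.sqrt 3 * (1 - 2*α) - 1)^2 * (3*(1-2*α) + 2*Real.sqrt 3) :=
      mul_nonneg (sq_nonneg _) (by nlinarith)
    have expand : (Real.sqrt 3 * (1 - 2*α) - 1)^2 * (3*(1-2*α) + 2*Real.sqrt 3)
        = 2*Real.sqrt 3 - 9*(1-2*α) + 9*(1-2*α)^3 := by
      linear_combination (3*(1-2*α)^3 + 2*Real.sqrt 3*(1-2*α)^2 - 4*(1-2*α)) * h3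
    rw [expand] at key
    linarith
  rcases le_or_gt α (47/200) with hA | hB
  · -- small α regime: p = 1 - 4α, q = 2α
    refine ⟨1 - 4*α, 2*α, by linarith, by linarith, by linarith, ?_, ?_, ?_⟩
    · intro hq; linarith
    · intro _
      have hsq : (1 - 2*α)/2 ≤ Real.sqrt (2 * (1 - 4*α) * (1 - α)) := by
        rw [Real.le_sqrt (by linarith) (by nlinarith)]
        nlinarith [sq_nonneg α]
      linarith
    · calc α * (1 - α) * (1 - 4*α + 2*α) = α * (1 - α) * (1 - 2*α) := by ring
        _ ≤ Real.sqrt 3 / 18 := hobjA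
  · -- large α regime
    set s : ℝ := (13 + 15*α)/50 with hs
    set t : ℝ := (24 - 3*α)/50 with ht
    have hspos : 0 < s := by rw [hs]; linarith
    have htpos : 0 < t := by rw [ht]; linarith
    refine ⟨s^2/(2*(1-α)), t^2/(2*α), by positivity, by positivity, ?_, ?_, ?_, ?_⟩
    · -- constraint (i)
      rw [div_add_div _ _ (by positivity) (by positivity), le_div_iff₀ (by positivity)]
      rw [hs, ht]
      nlinarith [mul_nonneg (show (0:ℝ) ≤ α - 47/200 by linarith)
          (show (0:ℝ) ≤ 1/2 - α by linarith),
        sq_nonneg (α - 47/200), sq_nonneg (α - 1/2), sq_nonneg α]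
    · -- constraint (ii)
      intro _
      have h2q : 2 * (t^2/(2*α)) * α = t^2 := by field_simp
      rw [h2q, Real.sqrt_sq htpos.le]
      have key : (1 - 2*t) * (2*(1-α)) ≤ s^2 := by
        rw [hs, ht]
        nlinarith [mul_nonneg (show (0:ℝ) ≤ α - 47/200 by linarith)
          (show (0:ℝ) ≤ 165*α + 31 by linarith)]
      have : 1 - 2*t ≤ s^2/(2*(1-α)) := (le_div_iff₀ (by positivity)).2 key
      linarith
    · -- constraint (iii)
      intro _
      have h2p : 2 * (s^2/(2*(1-α))) * (1-α) = s^2 := by field_simp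
      rw [h2p, Real.sqrt_sq hspos.le]
      have key : (1 - 2*s) * (2*α) ≤ t^2 := by
        rw [hs, ht]
        nlinarith [sq_nonneg (1003*α - 424)]
      have : 1 - 2*s ≤ t^2/(2*α) := (le_div_iff₀ (by positivity)).2 key
      linarith
    · -- objective
      have heq : α * (1 - α) * (s^2/(2*(1-α)) + t^2/(2*α))
          = (α * s^2 + (1-α) * t^2) / 2 := by
        field_simp
      rw [heq]
      have h173 : (173:ℝ)/100 ≤ Real.sqrt 3 :=
        (Real.le_sqrt (by norm_num) (by norm_num)).2 (by norm_num)
      have hpoly : (α * s^2 + (1-α) * t^2) / 2 ≤ 173/1800 := by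
        rw [hs, ht]
        nlinarith [mul_nonneg (show (0:ℝ) ≤ α - 47/200 by linarith)
            (show (0:ℝ) ≤ 1/2 - α by linarith),
          sq_nonneg (α - 47/200), sq_nonneg (α - 1/2)]
      linarith
end

section
/- Let α be a real number with 0 < α ≤ 1/2 and let p, q ≥ 0 be real numbers such that p + q ≥ 1 − 2α and such that 2√(2p(1−α)) + q ≥ 1 whenever p < 2α²/(1−α). Then for every real x with 0 < x ≤ α/(1−α), p/x + 2(1−α)x + q ≥ 1. -/
/-! On `(0, α/(1-α)]` the function `f x = p/x + 2(1-α)x + q` is handled in two regimes. If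
`p < 2α²/(1-α)`, AM-GM gives `f x ≥ 2√(2p(1-α)) + q ≥ 1`. Otherwise the minimiser
`√(p/(2(1-α)))` of `f` lies beyond `α/(1-α)`, so `f` is decreasing there and
`f x ≥ f (α/(1-α)) = p(1-α)/α + 2α + q ≥ p + q + 2α ≥ 1`, using `α ≤ 1/2`. -/

lemma two_mul_sqrt_mul_le_div_add_mul {p c x : ℝ} (hp : 0 ≤ p) (hc : 0 ≤ c) (hx : 0 < x) :
    2 * √(p * c) ≤ p / x + c * x := by
  have hpx : 0 ≤ p / x := div_nonneg hp hx.le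
  have hcx : 0 ≤ c * x := mul_nonneg hc hx.le
  have hprod : p * c = p / x * (c * x) := by field_simp
  rw [hprod, Real.sqrt_mul hpx]
  nlinarith [sq_nonneg (√(p / x) - √(c * x)), Real.sq_sqrt hpx, Real.sq_sqrt hcx]

lemma div_add_mul_le_div_add_mul_of_mul_le {p c x y : ℝ} (hx : 0 < x) (hxy : x ≤ y)
    (h : c * (x * y) ≤ p) : p / y + c * y ≤ p / x + c * x := by
  have hy : 0 < y := hx.trans_le hxy
  have hdiff : p / x - p / y = p * (y - x) / (x * y) := by field_simp
  have hgap : c * (y - x) ≤ p * (y - x) / (x * y) := by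
    rw [le_div_iff₀ (mul_pos hx hy)]
    nlinarith [sub_nonneg.mpr hxy]
  linarith

theorem dual_constraint_case_two_general (α p q : ℝ) (h0 : 0 < α) (h1 : α ≤ 1 / 2)
    (hp : 0 ≤ p) (hpq : 1 - 2 * α ≤ p + q)
    (hsp : p < 2 * α ^ 2 / (1 - α) → 1 ≤ 2 * Real.sqrt (2 * p * (1 - α)) + q) :
    ∀ x : ℝ, 0 < x → x ≤ α / (1 - α) → 1 ≤ p / x + 2 * (1 - α) * x + q := by
  intro x hx hxy
  have hα : 0 < 1 - α := by linarith
  rcases lt_or_ge p (2 * α ^ 2 / (1 - α)) with hsmall | hlarge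
  · calc 1 ≤ 2 * √(p * (2 * (1 - α))) + q := by
          simpa only [mul_comm 2 p, mul_assoc] using hsp hsmall
      _ ≤ p / x + 2 * (1 - α) * x + q := by
          gcongr
          exact two_mul_sqrt_mul_le_div_add_mul hp (by positivity) hx
  · set y := α / (1 - α) with hy
    have hy_pos : 0 < y := div_pos h0 hα
    have hcxy : 2 * (1 - α) * (x * y) ≤ p :=
      calc 2 * (1 - α) * (x * y) ≤ 2 * (1 - α) * (y * y) := by gcongr
        _ = 2 * α ^ 2 / (1 - α) := by rw [hy]; field_simp
        _ ≤ p := hlarge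
    have hp_le : p ≤ p / y := by
      rw [le_div_iff₀ hy_pos]
      exact mul_le_of_le_one_right hp ((div_le_one hα).mpr (by linarith))
    have hcy : 2 * (1 - α) * y = 2 * α := by rw [hy]; field_simp
    calc 1 ≤ p / y + 2 * (1 - α) * y + q := by linarith
      _ ≤ p / x + 2 * (1 - α) * x + q := by
          gcongr ?_ + q
          exact div_add_mul_le_div_add_mul_of_mul_le hx hxy hcxy

/-- If `0 < α ≤ 1/2`, `p, q ≥ 0`, `p + q ≥ 1 - 2α`, and `2√(2p(1-α)) + q ≥ 1` whenever
`p < 2α²/(1-α)`, then `p/x + 2(1-α)x + q ≥ 1` for all `0 < x ≤ α/(1-α)`. -/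
theorem dual_constraint_case_two (α p q : ℝ) (h0 : 0 < α) (h1 : α ≤ 1 / 2)
    (hp : 0 ≤ p) (hq : 0 ≤ q) (hpq : 1 - 2 * α ≤ p + q)
    (hsp : p < 2 * α ^ 2 / (1 - α) → 1 ≤ 2 * Real.sqrt (2 * p * (1 - α)) + q) :
    ∀ x : ℝ, 0 < x → x ≤ α / (1 - α) → 1 ≤ p / x + 2 * (1 - α) * x + q :=
  dual_constraint_case_two_general α p q h0 h1 hp hpq hsp
end

section
/- Let α₂ = (5 − √17)/4. For every real α with α₂ ≤ α ≤ 1/2, setting p = 0.42α and q = 0.09622/(α(1−α)) − 0.42α, the following hold: (i) q > 0; (ii) p + q ≥ 1 − 2α; (iii) p + 2√(2qα) ≥ 1; (iv) 2√(2p(1−α)) + q ≥ 1; and (v) p + q ≤ (√3/18)/(α(1−α)). -/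
/-- For `α₂ = (5 - √17)/4 ≤ α ≤ 1/2`, the pair `p = 0.42α`,
`q = 0.09622/(α(1-α)) - 0.42α` is a feasible solution of (D') with
`p + q ≤ (√3/18)/(α(1-α))`. -/
theorem explicit_dual_feasible (α : ℝ) (h2 : (5 - Real.sqrt 17) / 4 ≤ α) (h1 : α ≤ 1 / 2)
    (p q : ℝ) (hpdef : p = 0.42 * α) (hqdef : q = 0.09622 / (α * (1 - α)) - 0.42 * α) :
    0 < q ∧
    1 - 2 * α ≤ p + q ∧
    1 ≤ p + 2 * Real.sqrt (2 * q * α) ∧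
    1 ≤ 2 * Real.sqrt (2 * p * (1 - α)) + q ∧
    p + q ≤ (Real.sqrt 3 / 18) / (α * (1 - α)) := by
  have h17 : Real.sqrt 17 ≤ 4.1232 := by
    rw [show (4.1232:ℝ) = Real.sqrt (4.1232^2) by rw [Real.sqrt_sq] <;> norm_num]
    exact Real.sqrt_le_sqrt (by norm_num)
  have hα : (0.2192:ℝ) ≤ α := by linarith
  have hs : 0 < α * (1 - α) := by nlinarith
  have h1α : 0 < 1 - α := by linarith
  have hq0 : 0 < q := by
    rw [hqdef, sub_pos, lt_div_iff₀ hs]; nlinarith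
  refine ⟨hq0, ?_, ?_, ?_, ?_⟩
  · rw [hpdef, hqdef]
    have : 1 - 2*α ≤ 0.09622/(α*(1-α)) := by
      rw [le_div_iff₀ hs]; nlinarith [sq_nonneg (α - 0.2192), mul_nonneg (sub_nonneg.2 hα) (sq_nonneg (α - 0.2192))]
    linarith
  · have h2qα : 2*q*α = (0.19244 - 0.84*α^2*(1-α))/(1-α) := by
      rw [hqdef]; field_simp; ring
    have hkey : ((1 - 0.42*α)/2)^2 ≤ 2*q*α := by
      rw [h2qα, le_div_iff₀ h1α]
      nlinarith [mul_nonneg (sub_nonneg.2 hα) (sq_nonneg (α - 0.4125)),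
        sq_nonneg (α - 0.4125), sq_nonneg (α - 0.2192),
        mul_nonneg (sub_nonneg.2 hα) (sub_nonneg.2 hα)]
    have := Real.sqrt_le_sqrt hkey
    rw [Real.sqrt_sq (by nlinarith)] at this
    rw [hpdef]; linarith
  · rcases le_or_gt (1 - q) 0 with hc | hc
    · have := Real.sqrt_nonneg (2*p*(1-α))
      linarith
    · have h1q : 1 - q = ((1+0.42*α)*(α*(1-α)) - 0.09622)/(α*(1-α)) := by
        rw [hqdef]; field_simp; ring
      have hpoly : ((1+0.42*α)*(α*(1-α)) - 0.09622)^2 ≤ 3.36*(α*(1-α))^3 := by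
        nlinarith [mul_nonneg (sub_nonneg.2 hα) (sub_nonneg.2 (by linarith : α ≤ 0.5)),
          sq_nonneg (α - 0.2192), sq_nonneg (α - 0.5), hs.le,
          mul_nonneg (mul_nonneg (sub_nonneg.2 hα) (sub_nonneg.2 (by linarith : α ≤ 0.5))) hs.le,
          mul_nonneg hs.le hs.le, sq_nonneg (α*(1-α) - 0.2),
          mul_nonneg (mul_nonneg hs.le hs.le) (sub_nonneg.2 hα)]
      have hkey : ((1 - q)/2)^2 ≤ 2*p*(1-α) := by
        rw [h1q, hpdef, div_div, div_pow, div_le_iff₀ (by positivity)]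
        exact hpoly.trans (le_of_eq (by ring))
      have := Real.sqrt_le_sqrt hkey
      rw [Real.sqrt_sq (by linarith)] at this
      linarith
  · have h3 : (1.73196:ℝ) ≤ Real.sqrt 3 := by
      rw [show (1.73196:ℝ) = Real.sqrt (1.73196^2) by rw [Real.sqrt_sq] <;> norm_num]
      exact Real.sqrt_le_sqrt (by norm_num)
    have hle : (0.09622:ℝ)/(α*(1-α)) ≤ (Real.sqrt 3 / 18)/(α*(1-α)) :=
      (div_le_div_iff_of_pos_right hs).mpr (by linarith)
    rw [hpdef, hqdef]; linarith
end
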